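/- arXiv:2409.05418 — 2 statements merged into one kernel-verified Lean document; each statement's English description precedes it below -/
import Mathlib

section
/- Let F : ℝ → ℝ be differentiable, μ-strongly convex, and with L-Lipschitz derivative, where 0 < μ ≤ L. Let x* be the minimizer of F (so F'(x*) = 0). If 0 < α ≤ 2/(μ + L), then for all x, |x - α F'(x) - x*| ≤ (1 - αμ)|x - x*|. -/
theorem gradient_step_contraction (F F' : ℝ → ℝ) (μ L α xstar : ℝ)
    (hμ : 0 < μ) (hμL : μ ≤ L)
    (hderiv : ∀ x, HasDerivAt F (F' x) x)
    (hsc : ∀ x y, (F' x - F' y) * (x - y) ≥ μ * (x - y) ^ 2)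
    (hlip : ∀ x y, |F' x - F' y| ≤ L * |x - y|)
    (hstar : F' xstar = 0)
    (hα0 : 0 < α) (hα : α ≤ 2 / (μ + L)) :
    ∀ x : ℝ, |x - α * F' x - xstar| ≤ (1 - α * μ) * |x - xstar| := by
  intro x
  have hg := hsc x xstar
  have hl := hlip x xstar
  rw [hstar, sub_zero] at hg hl
  have hsum : 0 < μ + L := by linarith
  have hα2 : α * (μ + L) ≤ 2 := (le_div_iff₀ hsum).mp hα
  rcases lt_trichotomy (x - xstar) 0 with hd | hd | hd
  · rw [abs_of_neg hd] at hl ⊢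
    rcases abs_cases (F' x) with ⟨h3, h3'⟩ | ⟨h3, h3'⟩ <;> rw [h3] at hl <;>
      rw [abs_le] <;> constructor <;> nlinarith
  · have hx : x = xstar := by linarith
    have hl' : |F' x| ≤ 0 := by rw [hd, abs_zero, mul_zero] at hl; exact hl
    have hg0 : F' x = 0 := abs_eq_zero.mp (le_antisymm hl' (abs_nonneg _))
    simp [hg0, hx, hstar]
  · rw [abs_of_pos hd] at hl ⊢
    rcases abs_cases (F' x) with ⟨h3, h3'⟩ | ⟨h3, h3'⟩ <;> rw [h3] at hl <;>
      rw [abs_le] <;> constructor <;> nlinarith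
end

section
/- Let x ∈ ℝ, Δ > 0, b_q ∈ ℝ, and suppose x ∈ [b_q - 3Δ, b_q + 3Δ). Define the zoom-in update: b_q' = Q(b_q, x, Δ) and Δ' = Δ/c with 1 < c ≤ 2. Then x ∈ [b_q' - 3Δ', b_q' + 3Δ'), i.e., the point remains in the unsaturated range of the refined quantizer. -/
/-- The 3-bit mid-rise uniform quantizer with basis `b`, input `ξ`, level `Δ`.
It outputs `b + (k + 1/2) * Δ` where `k = ⌊(ξ - b)/Δ⌋` clipped to `{-4,…,3}`. -/
noncomputable def Q3MRU (b ξ Δ : ℝ) : ℝ :=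
  b + ((max (-4 : ℤ) (min 3 ⌊(ξ - b) / Δ⌋) : ℝ) + 1 / 2) * Δ

theorem zoom_in_preserves_range (x b Δ c : ℝ) (hΔ : 0 < Δ)
    (hc1 : 1 < c) (hc2 : c ≤ 2)
    (h1 : b - 3 * Δ ≤ x) (h2 : x < b + 3 * Δ) :
    Q3MRU b x Δ - 3 * (Δ / c) ≤ x ∧ x < Q3MRU b x Δ + 3 * (Δ / c) := by
  have hc0 : (0:ℝ) < c := lt_trans one_pos hc1
  set k := ⌊(x - b) / Δ⌋ with hk
  have hk3 : -3 ≤ k := by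
    apply Int.le_floor.2
    push_cast
    rw [le_div_iff₀ hΔ]
    linarith
  have hk2 : k < 3 := by
    apply Int.floor_lt.2
    push_cast
    rw [div_lt_iff₀ hΔ]
    linarith
  have hmax : max (-4 : ℤ) (min 3 k) = k := by omega
  have hfl : (k:ℝ) ≤ (x - b) / Δ := Int.floor_le _
  have hfu : (x - b) / Δ < k + 1 := Int.lt_floor_add_one _
  have h1' : (k:ℝ) * Δ ≤ x - b := (le_div_iff₀ hΔ).1 hfl
  have h2' : x - b < ((k:ℝ) + 1) * Δ := (div_lt_iff₀ hΔ).1 hfu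
  have hdiv : Δ / 2 ≤ Δ / c := by
    rw [div_le_div_iff₀ (by norm_num) hc0]
    nlinarith
  have hmaxR : max ((-4:ℤ):ℝ) (min ((3:ℤ):ℝ) ((k:ℤ):ℝ)) = (k:ℝ) := by
    exact_mod_cast congrArg (fun z : ℤ => (z : ℝ)) hmax
  unfold Q3MRU
  rw [← hk]
  push_cast at hmaxR ⊢
  rw [hmaxR]
  constructor <;> nlinarith [hΔ.le]
end
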